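/- Let R_T be a rotation matrix in SO(3) and R̄ a rotation matrix with d/dt R̄ = R̄·ω̂ where ω = k·e_R(R̄ᵀR_T), k > 0, and R_T is constant. Then d/dt φ(R̄ᵀR_T) = −2k·‖e_R(R̄ᵀR_T)‖², where φ(R) := tr(I₃ − R) and e_R(R) := ((1/2)(R − Rᵀ))^∨. -/

import Mathlib

open Matrix BigOperators

def SO3 (R : Matrix (Fin 3) (Fin 3) ℝ) : Prop := Rᵀ * R = 1 ∧ R.det = 1

noncomputable def phi (R : Matrix (Fin 3) (Fin 3) ℝ) : ℝ := Matrix.trace (1 - R)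

noncomputable def hat (a : Fin 3 → ℝ) : Matrix (Fin 3) (Fin 3) ℝ :=
  !![0, -a 2, a 1; a 2, 0, -a 0; -a 1, a 0, 0]

noncomputable def sk (M : Matrix (Fin 3) (Fin 3) ℝ) : Matrix (Fin 3) (Fin 3) ℝ :=
  (1 / 2 : ℝ) • (M - Mᵀ)

noncomputable def vee (M : Matrix (Fin 3) (Fin 3) ℝ) : Fin 3 → ℝ := ![M 2 1, M 0 2, M 1 0]


lemma hat_transpose (a : Fin 3 → ℝ) : (hat a)ᵀ = -hat a := by
  ext i j
  fin_cases i <;> fin_cases j <;> simp [hat]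

/-- The symmetric part of `M` is invisible to the skew matrix `â`, and `tr(â b̂) = -2 a · b`. -/
lemma trace_hat_mul (a : Fin 3 → ℝ) (M : Matrix (Fin 3) (Fin 3) ℝ) :
    (hat a * M).trace = -2 * (a ⬝ᵥ vee (sk M)) := by
  simp only [trace, diag_apply, mul_apply, Fin.sum_univ_three, hat, of_apply, cons_val',
    cons_val_fin_one, cons_val_zero, cons_val_one, cons_val, dotProduct, vee, sk,
    Matrix.smul_apply, Matrix.sub_apply, transpose_apply, smul_eq_mul]
  ring

lemma phi_eq_sub_trace (M : Matrix (Fin 3) (Fin 3) ℝ) : phi M = 3 - M.trace := by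
  simp [phi, trace_sub]

lemma hasDerivAt_trace_transpose_mul {𝕜 m n : Type*} [NontriviallyNormedField 𝕜] [Fintype m]
    [Fintype n] {B : 𝕜 → Matrix m n 𝕜} {B' : Matrix m n 𝕜} {t : 𝕜} (C : Matrix m n 𝕜)
    (hB : ∀ i j, HasDerivAt (fun s => B s i j) (B' i j) t) :
    HasDerivAt (fun s => ((B s)ᵀ * C).trace) ((B'ᵀ * C).trace) t := by
  simp only [trace, diag, mul_apply, transpose_apply]
  exact HasDerivAt.fun_sum fun i _ => HasDerivAt.fun_sum fun j _ => (hB j i).mul_const _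

theorem stmt11_general (RT : Matrix (Fin 3) (Fin 3) ℝ)
    (Rb : ℝ → Matrix (Fin 3) (Fin 3) ℝ) (k : ℝ)
    (hder : ∀ t i j, HasDerivAt (fun s => Rb s i j)
      ((Rb t * hat (k • vee (sk ((Rb t)ᵀ * RT)))) i j) t) (t : ℝ) :
    HasDerivAt (fun s => phi ((Rb s)ᵀ * RT))
      (-(2 * k) * ∑ i, (vee (sk ((Rb t)ᵀ * RT)) i) ^ 2) t := by
  have hderiv : -((Rb t * hat (k • vee (sk ((Rb t)ᵀ * RT))))ᵀ * RT).trace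
      = -(2 * k) * ∑ i, vee (sk ((Rb t)ᵀ * RT)) i ^ 2 := by
    rw [transpose_mul, hat_transpose, Matrix.mul_assoc, Matrix.neg_mul, trace_neg, neg_neg,
      trace_hat_mul, smul_dotProduct, smul_eq_mul]
    simp only [dotProduct, ← sq]
    ring
  simp only [phi_eq_sub_trace]
  exact ((hasDerivAt_trace_transpose_mul RT (hder t)).const_sub 3).congr_deriv hderiv

/-- Derivative of the orientation error energy under the visual motion observer
update law `d/dt R̄ = R̄ ω̂` with `ω = k e_R(R̄ᵀ R_T)` for a static target `R_T`. -/
theorem stmt11 (RT : Matrix (Fin 3) (Fin 3) ℝ) (hRT : SO3 RT)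
    (Rb : ℝ → Matrix (Fin 3) (Fin 3) ℝ) (hRb : ∀ t, SO3 (Rb t)) (k : ℝ) (hk : 0 < k)
    (hder : ∀ t i j, HasDerivAt (fun s => Rb s i j)
      ((Rb t * hat (k • vee (sk ((Rb t)ᵀ * RT)))) i j) t) (t : ℝ) :
    HasDerivAt (fun s => phi ((Rb s)ᵀ * RT))
      (-(2 * k) * ∑ i, (vee (sk ((Rb t)ᵀ * RT)) i) ^ 2) t :=
  stmt11_general RT Rb k hder t
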